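/- Let f, g ∈ H_+^AC([0,1]) with λ(Fix(f)) = λ(Fix(g)) = 0, and suppose f and g are conjugate in H_+([0,1]), i.e., there exists an increasing self-homeomorphism ĥ of [0,1] with ĥ ∘ f = g ∘ ĥ. Then f and g are conjugate in H_+^AC([0,1]): there exists h ∈ H_+^AC([0,1]) with h ∘ f = g ∘ h. -/

import Mathlib

open MeasureTheory Set

/-- `f : ℝ → ℝ` is absolutely continuous on the interval `[a,b]`. -/
def ACOn (f : ℝ → ℝ) (a b : ℝ) : Prop :=
  ∀ ε > (0:ℝ), ∃ δ > (0:ℝ), ∀ n : ℕ, ∀ u v : Fin n → ℝ,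
    (∀ i, a ≤ u i ∧ u i ≤ v i ∧ v i ≤ b) →
    (∀ i j, i ≠ j → Disjoint (Ioo (u i) (v i)) (Ioo (u j) (v j))) →
    (∑ i, (v i - u i)) ≤ δ →
    (∑ i, |f (v i) - f (u i)|) ≤ ε

/-- The group `H₊([a,b])` of increasing self-homeomorphisms of `[a,b]`, encoded as the
set of permutations of `ℝ` which fix the complement of `[a,b]` pointwise, are strictly
increasing on `[a,b]`, and map `[a,b]` into (hence onto) itself continuously. -/
def Hplus (a b : ℝ) : Set (Equiv.Perm ℝ) :=
  {f | (∀ x, x ∉ Icc a b → f x = x) ∧ StrictMonoOn f (Icc a b) ∧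
       MapsTo f (Icc a b) (Icc a b) ∧ ContinuousOn f (Icc a b)}

/-- The group `H₊^AC([a,b])`: those `f ∈ H₊([a,b])` with both `f` and `f⁻¹`
absolutely continuous on `[a,b]`. -/
def Hac (a b : ℝ) : Set (Equiv.Perm ℝ) :=
  {f | f ∈ Hplus a b ∧ ACOn f a b ∧ ACOn f.symm a b}

/-- The metric `ρ(f,g) = ∫_a^b |f' - g'| dλ` on `H₊^AC([a,b])`. -/
noncomputable def rho (a b : ℝ) (f g : Equiv.Perm ℝ) : ℝ :=
  ∫ x in Ioo a b, |deriv (⇑f) x - deriv (⇑g) x|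

/-- The topology on `H₊^AC([a,b])` induced by the metric `ρ`. -/
noncomputable def rhoTop (a b : ℝ) : TopologicalSpace ↥(Hac a b) :=
  TopologicalSpace.generateFrom
    {U | ∃ f : ↥(Hac a b), ∃ ε : ℝ, 0 < ε ∧
      U = {g : ↥(Hac a b) | rho a b (f : Equiv.Perm ℝ) (g : Equiv.Perm ℝ) < ε}}

/-- The fixed-point set of `f`, within `[0,1]`. -/
def fixSet (f : Equiv.Perm ℝ) : Set ℝ := {x | x ∈ Icc (0:ℝ) 1 ∧ f x = x}

noncomputable instance : TopologicalSpace ↥(Hac 0 1) := rhoTop 0 1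

open scoped ENNReal

namespace S18


/-- Luzin N property relative to `[0,1]`. -/
def LN (T : ℝ → ℝ) : Prop := ∀ E ⊆ Icc (0:ℝ) 1, volume E = 0 → volume (T '' E) = 0

noncomputable def toOI (e : Equiv.Perm ℝ) (h : StrictMono ⇑e) : ℝ ≃o ℝ :=
  { toEquiv := e, map_rel_iff' := by intro a b; exact h.le_iff_le }

lemma symm_strictMono (e : Equiv.Perm ℝ) (h : StrictMono ⇑e) : StrictMono ⇑e.symm :=
  (toOI e h).symm.strictMono

lemma perm_continuous (e : Equiv.Perm ℝ) (h : StrictMono ⇑e) : Continuous ⇑e :=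
  (toOI e h).toHomeomorph.continuous

lemma zpow_strictMono (e : Equiv.Perm ℝ) (h : StrictMono ⇑e) : ∀ n : ℤ, StrictMono ⇑(e^n) := by
  intro n
  induction n using Int.induction_on with
  | zero => simpa using strictMono_id
  | succ k ih => rw [zpow_add_one]; exact (ih.comp h : _)
  | pred k ih =>
      rw [zpow_sub_one]
      exact (ih.comp (symm_strictMono e h) : _)

lemma zpow_fixed (e : Equiv.Perm ℝ) {a : ℝ} (ha : e a = a) : ∀ n : ℤ, (e^n) a = a := by
  have ha' : e.symm a = a := by conv_lhs => rw [← ha]; simp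
  intro n
  induction n using Int.induction_on with
  | zero => simp
  | succ k ih => rw [zpow_add_one, Equiv.Perm.mul_apply, ha, ih]
  | pred k ih =>
      have hinv : e⁻¹ a = a := by conv_lhs => rw [← ha]; simp
      rw [zpow_sub_one, Equiv.Perm.mul_apply, hinv, ih]

lemma zpow_add_apply (e : Equiv.Perm ℝ) (m k : ℤ) (x : ℝ) :
    (e^(m+k)) x = (e^m) ((e^k) x) := by
  rw [zpow_add, Equiv.Perm.mul_apply]

lemma zpow_one_add_apply (e : Equiv.Perm ℝ) (k : ℤ) (x : ℝ) :
    (e^(k+1)) x = e ((e^k) x) := by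
  rw [add_comm, zpow_add_apply, zpow_one]


section comps
variable (U : Set ℝ)

noncomputable def cA (x : ℝ) : ℝ := sSup (Uᶜ ∩ Iic x)
noncomputable def cB (x : ℝ) : ℝ := sInf (Uᶜ ∩ Ici x)

variable {U}

lemma cA_mem (hU : IsOpen U) (hU1 : U ⊆ Ioo 0 1) {x : ℝ} (hx : x ∈ U) : cA U x ∈ Uᶜ := by
  have h0 : (0:ℝ) ∈ Uᶜ ∩ Iic x :=
    ⟨fun h => absurd (hU1 h).1 (lt_irrefl _), le_of_lt (hU1 hx).1⟩
  have hcl : IsClosed (Uᶜ ∩ Iic x) := (isClosed_compl_iff.2 hU).inter isClosed_Iic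
  exact (IsClosed.csSup_mem hcl ⟨0, h0⟩ ⟨x, fun z hz => hz.2⟩).1

lemma cA_le {x : ℝ} (hU1 : U ⊆ Ioo 0 1) (hx : x ∈ U) : cA U x ≤ x :=
  csSup_le ⟨0, by exact ⟨fun h => absurd (hU1 h).1 (lt_irrefl _), le_of_lt (hU1 hx).1⟩⟩
    (fun z hz => hz.2)

lemma cA_nonneg (hU1 : U ⊆ Ioo 0 1) {x : ℝ} (hx : x ∈ U) : 0 ≤ cA U x :=
  le_csSup ⟨x, fun z hz => hz.2⟩
    ⟨fun h => absurd (hU1 h).1 (lt_irrefl _), le_of_lt (hU1 hx).1⟩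

lemma cA_lt (hU : IsOpen U) (hU1 : U ⊆ Ioo 0 1) {x : ℝ} (hx : x ∈ U) : cA U x < x :=
  lt_of_le_of_ne (cA_le hU1 hx) (fun h => (cA_mem hU hU1 hx) (by rw [h]; exact hx))

lemma cB_mem (hU : IsOpen U) (hU1 : U ⊆ Ioo 0 1) {x : ℝ} (hx : x ∈ U) : cB U x ∈ Uᶜ := by
  have hcl : IsClosed (Uᶜ ∩ Ici x) := (isClosed_compl_iff.2 hU).inter isClosed_Ici
  exact (IsClosed.csInf_mem hcl
    ⟨1, fun h => absurd (hU1 h).2 (lt_irrefl _), le_of_lt (hU1 hx).2⟩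
    ⟨x, fun z hz => hz.2⟩).1

lemma cB_ge (hU1 : U ⊆ Ioo 0 1) {x : ℝ} (hx : x ∈ U) : x ≤ cB U x :=
  le_csInf ⟨1, fun h => absurd (hU1 h).2 (lt_irrefl _), le_of_lt (hU1 hx).2⟩
    (fun z hz => hz.2)

lemma cB_le_one (hU1 : U ⊆ Ioo 0 1) {x : ℝ} (hx : x ∈ U) : cB U x ≤ 1 :=
  csInf_le ⟨x, fun z hz => hz.2⟩
    ⟨fun h => absurd (hU1 h).2 (lt_irrefl _), le_of_lt (hU1 hx).2⟩

lemma lt_cB (hU : IsOpen U) (hU1 : U ⊆ Ioo 0 1) {x : ℝ} (hx : x ∈ U) : x < cB U x :=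
  lt_of_le_of_ne (cB_ge hU1 hx) (fun h => (cB_mem hU hU1 hx) (by rw [← h]; exact hx))

lemma ioo_sub (hU : IsOpen U) (hU1 : U ⊆ Ioo 0 1) {x : ℝ} (hx : x ∈ U) :
    Ioo (cA U x) (cB U x) ⊆ U := by
  intro y hy
  by_contra hyU
  rcases le_or_gt y x with h | h
  · have : y ≤ cA U x := le_csSup (s := Uᶜ ∩ Iic x) ⟨x, fun z hz => hz.2⟩ ⟨hyU, h⟩
    exact absurd this (not_le.2 hy.1)
  · have : cB U x ≤ y := csInf_le (s := Uᶜ ∩ Ici x) ⟨x, fun z hz => hz.2⟩ ⟨hyU, le_of_lt h⟩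
    exact absurd this (not_le.2 hy.2)

lemma comp_eq (hU1 : U ⊆ Ioo 0 1) {x a b : ℝ} (ha : a ∉ U) (hb : b ∉ U)
    (hx : x ∈ Ioo a b) (hsub : Ioo a b ⊆ U) : cA U x = a ∧ cB U x = b := by
  have hxU : x ∈ U := hsub hx
  constructor
  · refine le_antisymm (csSup_le ⟨a, ha, le_of_lt hx.1⟩ ?_)
      (le_csSup ⟨x, fun z hz => hz.2⟩ ⟨ha, le_of_lt hx.1⟩)
    intro z hz
    by_contra hza
    push_neg at hza
    exact hz.1 (hsub ⟨hza, lt_of_le_of_lt hz.2 hx.2⟩)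
  · refine le_antisymm (csInf_le ⟨x, fun z hz => hz.2⟩ ⟨hb, le_of_lt hx.2⟩)
      (le_csInf ⟨b, hb, le_of_lt hx.2⟩ ?_)
    intro z hz
    by_contra hzb
    push_neg at hzb
    exact hz.1 (hsub ⟨lt_of_lt_of_le hx.1 hz.2, hzb⟩)

lemma comp_congr (hU : IsOpen U) (hU1 : U ⊆ Ioo 0 1) {x y : ℝ} (hx : x ∈ U)
    (hy : y ∈ Ioo (cA U x) (cB U x)) : cA U y = cA U x ∧ cB U y = cB U x :=
  comp_eq hU1 (cA_mem hU hU1 hx) (cB_mem hU hU1 hx) hy (ioo_sub hU hU1 hx)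

lemma comp_cover (hU : IsOpen U) (hU1 : U ⊆ Ioo 0 1) {x : ℝ} (hx : x ∈ U) :
    ∃ q : ℚ, (q:ℝ) ∈ U ∧ x ∈ Ioo (cA U (q:ℝ)) (cB U (q:ℝ)) := by
  obtain ⟨q, hq1, hq2⟩ := exists_rat_btwn (lt_trans (cA_lt hU hU1 hx) (lt_cB hU hU1 hx))
  have hqU : (q:ℝ) ∈ U := ioo_sub hU hU1 hx ⟨hq1, hq2⟩
  obtain ⟨e1, e2⟩ := comp_congr hU hU1 hx ⟨hq1, hq2⟩
  exact ⟨q, hqU, by rw [e1, e2]; exact ⟨cA_lt hU hU1 hx, lt_cB hU hU1 hx⟩⟩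

lemma comp_eq_or_disjoint (hU : IsOpen U) (hU1 : U ⊆ Ioo 0 1) {x y : ℝ} (hx : x ∈ U)
    (hy : y ∈ U) :
    (cA U x = cA U y ∧ cB U x = cB U y) ∨
      Disjoint (Ioo (cA U x) (cB U x)) (Ioo (cA U y) (cB U y)) := by
  by_cases hd : Disjoint (Ioo (cA U x) (cB U x)) (Ioo (cA U y) (cB U y))
  · exact Or.inr hd
  · obtain ⟨z, hzx, hzy⟩ := Set.not_disjoint_iff.1 hd
    obtain ⟨e1, e2⟩ := comp_congr hU hU1 hx hzx
    obtain ⟨f1, f2⟩ := comp_congr hU hU1 hy hzy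
    exact Or.inl ⟨by rw [← e1, f1], by rw [← e2, f2]⟩

end comps

lemma perm_image_Ioo (e : Equiv.Perm ℝ) (h : StrictMono ⇑e) (a b : ℝ) :
    ⇑e '' Ioo a b = Ioo (e a) (e b) := by
  rw [Equiv.image_eq_preimage_symm]
  ext x
  simp only [mem_preimage, mem_Ioo]
  constructor
  · intro ⟨h1, h2⟩
    exact ⟨by simpa using h h1, by simpa using h h2⟩
  · intro ⟨h1, h2⟩
    exact ⟨by simpa using (symm_strictMono e h) h1, by simpa using (symm_strictMono e h) h2⟩

lemma mono_image_Ioo (T : ℝ → ℝ) (h : Monotone T) (a b : ℝ) :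
    T '' Ioo a b ⊆ Icc (T a) (T b) := by
  rintro _ ⟨y, hy, rfl⟩
  exact ⟨h (le_of_lt hy.1), h (le_of_lt hy.2)⟩

lemma null_of_forall_le (A : Set ℝ) (h : ∀ ε : ℝ, 0 < ε → volume A ≤ ENNReal.ofReal ε) :
    volume A = 0 := by
  by_contra h0
  have hpos : 0 < volume A := pos_iff_ne_zero.2 h0
  have hfin : volume A < ⊤ := lt_of_le_of_lt (h 1 one_pos) (by simp)
  set r := (volume A).toReal with hr
  have hrpos : 0 < r := ENNReal.toReal_pos h0 hfin.ne
  have := h (r/2) (by linarith)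
  rw [show volume A = ENNReal.ofReal r from (ENNReal.ofReal_toReal hfin.ne).symm] at this
  have := (ENNReal.ofReal_le_ofReal_iff (by linarith)).1 this
  linarith

/-- A monotone function that is AC on `[0,1]` maps null subsets of `[0,1]` to null sets. -/
lemma luzinN_of_acOn (T : ℝ → ℝ) (hm : Monotone T) (hAC : ACOn T 0 1) : LN T := by
  intro E hE hE0
  have hsplit : T '' E ⊆ T '' (E ∩ Ioo 0 1) ∪ {T 0, T 1} := by
    rintro _ ⟨x, hx, rfl⟩
    rcases eq_or_lt_of_le (hE hx).1 with h0 | h0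
    · exact Or.inr (by left; rw [← h0])
    rcases eq_or_lt_of_le (hE hx).2 with h1 | h1
    · exact Or.inr (by right; rw [h1]; rfl)
    exact Or.inl ⟨x, ⟨hx, h0, h1⟩, rfl⟩
  have key : ∀ ε : ℝ, 0 < ε → volume (T '' (E ∩ Ioo 0 1)) ≤ ENNReal.ofReal ε := by
    intro ε hε
    obtain ⟨δ, hδ, hACδ⟩ := hAC ε hε
    have hE0' : volume (E ∩ Ioo 0 1) < ENNReal.ofReal δ := by
      refine lt_of_le_of_lt (le_trans (measure_mono inter_subset_left) hE0.le) ?_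
      simpa using hδ
    obtain ⟨U0, hU0E, hU0open, hU0vol⟩ := exists_isOpen_lt_of_lt _ _ hE0'
    set U : Set ℝ := U0 ∩ Ioo 0 1 with hUdef
    have hUopen : IsOpen U := hU0open.inter isOpen_Ioo
    have hUsub : U ⊆ Ioo 0 1 := inter_subset_right
    have hUvol : volume U ≤ ENNReal.ofReal δ :=
      le_trans (measure_mono inter_subset_left) hU0vol.le
    have hEU : E ∩ Ioo 0 1 ⊆ U := fun x hx => ⟨hU0E hx, hx.2⟩
    set P : Set (ℝ × ℝ) := (fun q : ℚ => (cA U (q:ℝ), cB U (q:ℝ))) '' {q : ℚ | (q:ℝ) ∈ U}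
      with hPdef
    have hPcount : P.Countable := Countable.image (to_countable _) _
    haveI : Countable ↥P := hPcount.to_subtype
    have hcover : U ⊆ ⋃ p : ↥P, Ioo (p:ℝ×ℝ).1 (p:ℝ×ℝ).2 := by
      intro x hx
      obtain ⟨q, hqU, hq⟩ := comp_cover hUopen hUsub hx
      exact mem_iUnion.2 ⟨⟨_, ⟨q, hqU, rfl⟩⟩, hq⟩
    have hPgood : ∀ p ∈ P, p.1 ∈ Icc (0:ℝ) 1 ∧ p.2 ∈ Icc (0:ℝ) 1 ∧ p.1 ≤ p.2 ∧
        Ioo p.1 p.2 ⊆ U := by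
      rintro p ⟨q, hq, rfl⟩
      exact ⟨⟨cA_nonneg hUsub hq, le_trans (cA_le hUsub hq) (le_of_lt (hUsub hq).2)⟩,
        ⟨le_trans (le_of_lt (hUsub hq).1) (cB_ge hUsub hq), cB_le_one hUsub hq⟩,
        le_of_lt (lt_trans (cA_lt hUopen hUsub hq) (lt_cB hUopen hUsub hq)),
        ioo_sub hUopen hUsub hq⟩
    have hPdisj : ∀ p ∈ P, ∀ p' ∈ P, p ≠ p' → Disjoint (Ioo p.1 p.2) (Ioo p'.1 p'.2) := by
      rintro p ⟨q, hq, rfl⟩ p' ⟨q', hq', rfl⟩ hne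
      rcases comp_eq_or_disjoint hUopen hUsub hq hq' with ⟨e1, e2⟩ | hd
      · exact absurd (Prod.ext e1 e2) hne
      · exact hd
    have hbound : ∀ s : Finset ↥P, (∑ p ∈ s, volume (T '' Ioo (p:ℝ×ℝ).1 (p:ℝ×ℝ).2))
        ≤ ENNReal.ofReal ε := by
      intro s
      classical
      set n := s.card with hn
      set eqv := s.equivFin with heqv
      set w : Fin n → ↥P := fun i => (eqv.symm i : {x // x ∈ s}).1 with hw
      have hwinj : Function.Injective w := fun i j hij =>
        eqv.symm.injective (Subtype.ext hij)
      set u : Fin n → ℝ := fun i => ((w i : ℝ × ℝ)).1 with hu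
      set v : Fin n → ℝ := fun i => ((w i : ℝ × ℝ)).2 with hv
      have hmemP : ∀ i, ((w i : ℝ × ℝ)) ∈ P := fun i => (w i).2
      have huv : ∀ i, (0:ℝ) ≤ u i ∧ u i ≤ v i ∧ v i ≤ 1 := by
        intro i
        obtain ⟨h1, h2, h3, _⟩ := hPgood _ (hmemP i)
        exact ⟨h1.1, h3, h2.2⟩
      have hdisj : ∀ i j, i ≠ j → Disjoint (Ioo (u i) (v i)) (Ioo (u j) (v j)) := by
        intro i j hij
        refine hPdisj _ (hmemP i) _ (hmemP j) (fun hcontra => hij (hwinj (Subtype.ext hcontra)))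
      -- total length bound
      have hlen : (∑ i, (v i - u i)) ≤ δ := by
        have hmeas : volume (⋃ i, Ioo (u i) (v i)) = ∑ i, volume (Ioo (u i) (v i)) := by
          rw [measure_iUnion ?_ (fun i => measurableSet_Ioo), tsum_fintype]
          intro i j hij
          exact hdisj i j hij
        have hsub2 : (⋃ i, Ioo (u i) (v i)) ⊆ U := by
          intro z hz
          obtain ⟨i, hi⟩ := mem_iUnion.1 hz
          exact (hPgood _ (hmemP i)).2.2.2 hi
        have h1 : (∑ i, volume (Ioo (u i) (v i))) ≤ ENNReal.ofReal δ :=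
          hmeas ▸ le_trans (measure_mono hsub2) hUvol
        have h2 : (∑ i, volume (Ioo (u i) (v i))) = ENNReal.ofReal (∑ i, (v i - u i)) := by
          rw [ENNReal.ofReal_sum_of_nonneg (fun i _ => sub_nonneg.2 (huv i).2.1)]
          exact Finset.sum_congr rfl (fun i _ => Real.volume_Ioo)
        rw [h2] at h1
        exact (ENNReal.ofReal_le_ofReal_iff (le_of_lt hδ)).1 h1
      have hACapp : (∑ i, |T (v i) - T (u i)|) ≤ ε := hACδ n u v huv hdisj hlen
      -- now bound the measure sum
      have hterm : ∀ i, volume (T '' Ioo (u i) (v i)) ≤ ENNReal.ofReal (T (v i) - T (u i)) := by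
        intro i
        refine le_trans (measure_mono (mono_image_Ioo T hm _ _)) ?_
        rw [Real.volume_Icc]
      have : (∑ p ∈ s, volume (T '' Ioo (p:ℝ×ℝ).1 (p:ℝ×ℝ).2))
          = ∑ i, volume (T '' Ioo (u i) (v i)) := by
        rw [← Finset.sum_attach s (fun p => volume (T '' Ioo (p:ℝ×ℝ).1 (p:ℝ×ℝ).2))]
        exact (Equiv.sum_comp eqv.symm _).symm
      rw [this]
      refine le_trans (Finset.sum_le_sum (fun i _ => hterm i)) ?_
      rw [← ENNReal.ofReal_sum_of_nonneg (fun i _ => sub_nonneg.2 (hm (huv i).2.1))]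
      refine ENNReal.ofReal_le_ofReal (le_trans ?_ hACapp)
      exact Finset.sum_le_sum (fun i _ => le_abs_self _)
    calc volume (T '' (E ∩ Ioo 0 1)) ≤ volume (⋃ p : ↥P, T '' Ioo (p:ℝ×ℝ).1 (p:ℝ×ℝ).2) := by
          refine measure_mono ?_
          rintro _ ⟨x, hx, rfl⟩
          obtain ⟨p, hp⟩ := mem_iUnion.1 (hcover (hEU hx))
          exact mem_iUnion.2 ⟨p, ⟨x, hp, rfl⟩⟩
      _ ≤ ∑' p : ↥P, volume (T '' Ioo (p:ℝ×ℝ).1 (p:ℝ×ℝ).2) := measure_iUnion_le _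
      _ ≤ ENNReal.ofReal ε := by
          rw [ENNReal.tsum_eq_iSup_sum]
          exact iSup_le hbound
  have : volume (T '' E) ≤ volume (T '' (E ∩ Ioo 0 1)) + volume ({T 0, T 1} : Set ℝ) :=
    le_trans (measure_mono hsplit) (measure_union_le _ _)
  have hpts : volume ({T 0, T 1} : Set ℝ) = 0 := by
    have h2 : ({T 0, T 1} : Set ℝ) = {T 0} ∪ {T 1} := rfl
    rw [h2]
    exact measure_union_null (measure_singleton _) (measure_singleton _)
  rw [hpts, add_zero] at this
  refine null_of_forall_le _ (fun ε hε => le_trans this (key ε hε))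

open Filter in
lemma exists_delta_of_ac (μ : Measure ℝ) [IsFiniteMeasure μ] (hac : μ ≪ volume) :
    ∀ ε : ℝ≥0∞, 0 < ε → ∃ δ : ℝ, 0 < δ ∧
      ∀ s : Set ℝ, MeasurableSet s → volume s ≤ ENNReal.ofReal δ → μ s ≤ ε := by
  intro ε hε
  by_contra hcon
  push_neg at hcon
  have hstep : ∀ N : ℕ, ∃ s : Set ℝ, MeasurableSet s ∧
      volume s ≤ ENNReal.ofReal ((1/2:ℝ)^N) ∧ ε < μ s := by
    intro N
    obtain ⟨s, hs1, hs2, hs3⟩ := hcon ((1/2:ℝ)^N) (by positivity)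
    exact ⟨s, hs1, hs2, hs3⟩
  choose s hsm hsv hsμ using hstep
  set B : ℕ → Set ℝ := fun N => ⋃ n : ℕ, s (N + n) with hB
  have hBm : ∀ N, MeasurableSet (B N) := fun N => MeasurableSet.iUnion (fun n => hsm _)
  have hBanti : Antitone B := by
    intro N M hNM
    intro z hz
    obtain ⟨n, hn⟩ := mem_iUnion.1 hz
    exact mem_iUnion.2 ⟨M - N + n, by rwa [show N + (M - N + n) = M + n by omega]⟩
  have hBvol : ∀ N, volume (B N) ≤ ENNReal.ofReal ((1/2:ℝ)^N) * 2 := by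
    intro N
    refine le_trans (measure_iUnion_le _) ?_
    have : ∀ n : ℕ, volume (s (N + n)) ≤ ENNReal.ofReal ((1/2:ℝ)^N) * (ENNReal.ofReal (1/2))^n := by
      intro n
      refine le_trans (hsv (N + n)) ?_
      rw [pow_add, ENNReal.ofReal_mul (by positivity), ENNReal.ofReal_pow (by norm_num),
        ENNReal.ofReal_pow (by norm_num)]
    refine le_trans (ENNReal.tsum_le_tsum this) ?_
    rw [ENNReal.tsum_mul_left, ENNReal.tsum_geometric]
    refine mul_le_mul_right ?_ _
    rw [show (1 : ℝ≥0∞) - ENNReal.ofReal (1/2) = ENNReal.ofReal (1/2) by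
      rw [← ENNReal.ofReal_one]
      rw [← ENNReal.ofReal_sub _ (by norm_num)]
      norm_num]
    rw [show (2:ℝ≥0∞) = ENNReal.ofReal 2 by simp]
    rw [← ENNReal.ofReal_inv_of_pos (by norm_num)]
    norm_num
  set L : Set ℝ := ⋂ N, B N with hL
  have hLvol : volume L = 0 := by
    refine null_of_forall_le _ (fun η hη => ?_)
    obtain ⟨N, hN⟩ := exists_pow_lt_of_lt_one (show (0:ℝ) < η/2 by linarith) (by norm_num : (1/2:ℝ) < 1)
    refine le_trans (measure_mono (iInter_subset _ N)) (le_trans (hBvol N) ?_)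
    rw [show (2:ℝ≥0∞) = ENNReal.ofReal 2 by simp, ← ENNReal.ofReal_mul (by positivity)]
    refine ENNReal.ofReal_le_ofReal (by linarith)
  have hμL : μ L = 0 := hac hLvol
  have htend : Tendsto (fun N => μ (B N)) atTop (nhds (μ L)) := by
    refine tendsto_measure_iInter_atTop (fun N => (hBm N).nullMeasurableSet) hBanti ⟨0, ?_⟩
    exact (measure_lt_top μ _).ne
  have hlow : ∀ N, ε ≤ μ (B N) := by
    intro N
    refine le_trans (le_of_lt (hsμ N)) (measure_mono ?_)
    intro z hz
    exact mem_iUnion.2 ⟨0, by simpa using hz⟩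
  have : ε ≤ μ L := ge_of_tendsto htend (Eventually.of_forall hlow)
  rw [hμL] at this
  exact absurd this (not_le.2 hε)

/-- A strictly monotone surjection of `ℝ` fixing `0` and `1` with the Luzin N property
(on `[0,1]`) is absolutely continuous on `[0,1]`. -/
lemma acOn_of_luzinN (T : Equiv.Perm ℝ) (hT : StrictMono ⇑T) (h0 : T 0 = 0) (h1 : T 1 = 1)
    (hN : LN ⇑T) : ACOn ⇑T 0 1 := by
  have hTsm := symm_strictMono T hT
  have hmeas : Measurable ⇑T.symm := (perm_continuous _ hTsm).measurable
  set μ0 : Measure ℝ := Measure.map (⇑T.symm) volume with hμ0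
  set μ : Measure ℝ := μ0.restrict (Icc 0 1) with hμ
  have himg : ∀ A : Set ℝ, MeasurableSet A → μ0 A = volume (⇑T '' A) := by
    intro A hA
    rw [hμ0, Measure.map_apply hmeas hA, Equiv.image_eq_preimage_symm]
  have hfin : IsFiniteMeasure μ := by
    constructor
    rw [hμ, Measure.restrict_apply_univ, himg _ measurableSet_Icc]
    have : ⇑T '' Icc 0 1 = Icc (T 0) (T 1) := by
      rw [Equiv.image_eq_preimage_symm]
      ext x
      simp only [mem_preimage, mem_Icc]
      constructor
      · intro ⟨ha, hb⟩
        exact ⟨by simpa using hT.monotone ha, by simpa using hT.monotone hb⟩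
      · intro ⟨ha, hb⟩
        exact ⟨by simpa using hTsm.monotone ha, by simpa using hTsm.monotone hb⟩
    rw [this, h0, h1, Real.volume_Icc]
    simp
  haveI := hfin
  have hac : μ ≪ volume := by
    intro A hA
    rw [hμ, Measure.restrict_apply' measurableSet_Icc]
    set B := toMeasurable volume (A ∩ Icc 0 1) ∩ Icc 0 1 with hBdef
    have hBmeas : MeasurableSet B :=
      (measurableSet_toMeasurable _ _).inter measurableSet_Icc
    have hBnull : volume B = 0 := by
      refine measure_mono_null (inter_subset_left) ?_
      rw [measure_toMeasurable]
      exact measure_mono_null inter_subset_left hA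
    have hsub : A ∩ Icc 0 1 ⊆ B :=
      fun z hz => ⟨subset_toMeasurable _ _ hz, hz.2⟩
    refine measure_mono_null hsub ?_
    rw [himg _ hBmeas]
    exact hN B inter_subset_right hBnull
  intro ε hε
  obtain ⟨δ, hδ, hδ2⟩ := exists_delta_of_ac μ hac (ENNReal.ofReal ε) (by simpa using hε)
  refine ⟨δ, hδ, ?_⟩
  intro n u v huv hdisj hsum
  set S : Set ℝ := ⋃ i, Ioo (u i) (v i) with hS
  have hSmeas : MeasurableSet S := MeasurableSet.iUnion (fun i => measurableSet_Ioo)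
  have hSvol : volume S ≤ ENNReal.ofReal δ := by
    refine le_trans (measure_iUnion_le _) ?_
    rw [tsum_fintype]
    calc (∑ i, volume (Ioo (u i) (v i))) = ENNReal.ofReal (∑ i, (v i - u i)) := by
          rw [ENNReal.ofReal_sum_of_nonneg (fun i _ => sub_nonneg.2 (huv i).2.1)]
          exact Finset.sum_congr rfl (fun i _ => Real.volume_Ioo)
      _ ≤ ENNReal.ofReal δ := ENNReal.ofReal_le_ofReal hsum
  have hμS : μ S ≤ ENNReal.ofReal ε := hδ2 S hSmeas hSvol
  have hμS' : μ S = ENNReal.ofReal (∑ i, (T (v i) - T (u i))) := by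
    have hres : μ S = μ0 S := by
      rw [hμ, Measure.restrict_apply' measurableSet_Icc]
      congr 1
      refine inter_eq_left.2 ?_
      intro z hz
      obtain ⟨i, hi⟩ := mem_iUnion.1 hz
      exact ⟨le_trans (huv i).1 (le_of_lt hi.1), le_trans (le_of_lt hi.2) (huv i).2.2⟩
    rw [hres, himg _ hSmeas, image_iUnion]
    have himgIoo : ∀ i, ⇑T '' Ioo (u i) (v i) = Ioo (T (u i)) (T (v i)) :=
      fun i => perm_image_Ioo T hT _ _
    simp_rw [himgIoo]
    rw [measure_iUnion ?_ (fun i => measurableSet_Ioo)]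
    · rw [tsum_fintype]
      rw [ENNReal.ofReal_sum_of_nonneg (fun i _ => sub_nonneg.2 (hT.monotone (huv i).2.1))]
      exact Finset.sum_congr rfl (fun i _ => Real.volume_Ioo)
    · intro i j hij
      have h2 := hdisj i j hij
      simp only [Function.onFun]
      rw [← himgIoo i, ← himgIoo j]
      exact (Set.disjoint_image_iff T.injective).2 h2
  rw [hμS'] at hμS
  have := (ENNReal.ofReal_le_ofReal_iff (le_of_lt hε)).1 hμS
  refine le_trans (le_of_eq ?_) this
  refine Finset.sum_congr rfl (fun i _ => ?_)
  rw [abs_of_nonneg (sub_nonneg.2 (hT.monotone (huv i).2.1))]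

section dynamics
variable (φ : Equiv.Perm ℝ) {a b : ℝ}

lemma orb_mem (hm : StrictMono ⇑φ) (hfa : φ a = a) (hfb : φ b = b) :
    ∀ n : ℤ, ∀ y ∈ Ioo a b, (φ^n) y ∈ Ioo a b := by
  intro n y hy
  have h1 : (φ^n) a = a := zpow_fixed φ hfa n
  have h2 : (φ^n) b = b := zpow_fixed φ hfb n
  exact ⟨h1 ▸ (zpow_strictMono φ hm n) hy.1, h2 ▸ (zpow_strictMono φ hm n) hy.2⟩

lemma orb_strictMono (hm : StrictMono ⇑φ) (hfa : φ a = a) (hfb : φ b = b)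
    (hgt : ∀ y ∈ Ioo a b, y < φ y) {y : ℝ} (hy : y ∈ Ioo a b) :
    StrictMono (fun n : ℤ => (φ^n) y) := by
  refine strictMono_int_of_lt_succ (fun n => ?_)
  have hmem := orb_mem φ hm hfa hfb n y hy
  calc (φ^n) y < φ ((φ^n) y) := hgt _ hmem
    _ = (φ^(n+1)) y := (zpow_one_add_apply φ n y).symm

lemma escape_up (hm : StrictMono ⇑φ) (hcont : Continuous ⇑φ)
    (hgt : ∀ y ∈ Ioo a b, y < φ y) (hmaps : ∀ y ∈ Ioo a b, φ y ∈ Ioo a b)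
    {y z : ℝ} (hy : y ∈ Ioo a b) (hz : z ∈ Ioo a b) : ∃ n : ℕ, z < (⇑φ)^[n] y := by
  by_contra hcon
  push_neg at hcon
  set s : ℕ → ℝ := fun n => (⇑φ)^[n] y with hs
  have hsmem : ∀ n, s n ∈ Ioo a b := by
    intro n
    induction n with
    | zero => exact hy
    | succ k ih =>
        show (⇑φ)^[k+1] y ∈ Ioo a b
        rw [Function.iterate_succ_apply']
        exact hmaps _ ih
  have hsmono : Monotone s := by
    refine monotone_nat_of_le_succ (fun n => ?_)
    show (⇑φ)^[n] y ≤ (⇑φ)^[n+1] y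
    rw [Function.iterate_succ_apply']
    exact le_of_lt (hgt _ (hsmem n))
  have hbdd : BddAbove (range s) := ⟨z, by rintro _ ⟨n, rfl⟩; exact hcon n⟩
  set L := ⨆ n, s n with hL
  have htend : Filter.Tendsto s Filter.atTop (nhds L) := tendsto_atTop_ciSup hsmono hbdd
  have htend2 : Filter.Tendsto (fun n => s (n+1)) Filter.atTop (nhds L) :=
    htend.comp (Filter.tendsto_add_atTop_nat 1)
  have htend3 : Filter.Tendsto (fun n => φ (s n)) Filter.atTop (nhds (φ L)) :=
    (hcont.tendsto L).comp htend
  have hφL : φ L = L := by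
    refine tendsto_nhds_unique htend3 ?_
    have heq : (fun n => φ (s n)) = fun n => s (n+1) := by
      funext n
      show φ ((⇑φ)^[n] y) = (⇑φ)^[n+1] y
      rw [Function.iterate_succ_apply']
    rw [heq]
    exact htend2
  have hLmem : L ∈ Ioo a b := by
    constructor
    · exact lt_of_lt_of_le hy.1 (le_ciSup hbdd 0)
    · exact lt_of_le_of_lt (ciSup_le (fun n => hcon n)) hz.2
  exact absurd hφL (ne_of_gt (hgt _ hLmem))

lemma escape_down (hm : StrictMono ⇑φ) (hcont : Continuous ⇑φ)
    (hlt : ∀ y ∈ Ioo a b, φ y < y) (hmaps : ∀ y ∈ Ioo a b, φ y ∈ Ioo a b)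
    {y z : ℝ} (hy : y ∈ Ioo a b) (hz : z ∈ Ioo a b) : ∃ n : ℕ, (⇑φ)^[n] y < z := by
  by_contra hcon
  push_neg at hcon
  set s : ℕ → ℝ := fun n => (⇑φ)^[n] y with hs
  have hsmem : ∀ n, s n ∈ Ioo a b := by
    intro n
    induction n with
    | zero => exact hy
    | succ k ih =>
        show (⇑φ)^[k+1] y ∈ Ioo a b
        rw [Function.iterate_succ_apply']
        exact hmaps _ ih
  have hsmono : Antitone s := by
    refine antitone_nat_of_succ_le (fun n => ?_)
    show (⇑φ)^[n+1] y ≤ (⇑φ)^[n] y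
    rw [Function.iterate_succ_apply']
    exact le_of_lt (hlt _ (hsmem n))
  have hbdd : BddBelow (range s) := ⟨z, by rintro _ ⟨n, rfl⟩; exact hcon n⟩
  set L := ⨅ n, s n with hL
  have htend : Filter.Tendsto s Filter.atTop (nhds L) := tendsto_atTop_ciInf hsmono hbdd
  have htend2 : Filter.Tendsto (fun n => s (n+1)) Filter.atTop (nhds L) :=
    htend.comp (Filter.tendsto_add_atTop_nat 1)
  have htend3 : Filter.Tendsto (fun n => φ (s n)) Filter.atTop (nhds (φ L)) :=
    (hcont.tendsto L).comp htend
  have hφL : φ L = L := by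
    refine tendsto_nhds_unique htend3 ?_
    have heq : (fun n => φ (s n)) = fun n => s (n+1) := by
      funext n
      show φ ((⇑φ)^[n] y) = (⇑φ)^[n+1] y
      rw [Function.iterate_succ_apply']
    rw [heq]
    exact htend2
  have hLmem : L ∈ Ioo a b := by
    constructor
    · exact lt_of_lt_of_le hz.1 (le_ciInf (fun n => hcon n))
    · exact lt_of_le_of_lt (ciInf_le hbdd 0) hy.2
  exact absurd hφL (ne_of_lt (hlt _ hLmem))

lemma floor_ex (hm : StrictMono ⇑φ) (hcont : Continuous ⇑φ) (hfa : φ a = a) (hfb : φ b = b)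
    (hgt : ∀ y ∈ Ioo a b, y < φ y) {m y : ℝ} (hmm : m ∈ Ioo a b) (hy : y ∈ Ioo a b) :
    ∃! n : ℤ, (φ^n) m ≤ y ∧ y < (φ^(n+1)) m := by
  have hmaps : ∀ w ∈ Ioo a b, φ w ∈ Ioo a b := by
    intro w hw
    have := orb_mem φ hm hfa hfb 1 w hw
    simpa using this
  have hmono := orb_strictMono φ hm hfa hfb hgt hmm
  -- S nonempty
  have hinv_maps : ∀ w ∈ Ioo a b, φ⁻¹ w ∈ Ioo a b := by
    intro w hw
    have := orb_mem φ hm hfa hfb (-1) w hw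
    rwa [zpow_neg_one] at this
  have hinv_lt : ∀ w ∈ Ioo a b, φ⁻¹ w < w := by
    intro w hw
    have hmem : φ⁻¹ w ∈ Ioo a b := hinv_maps w hw
    have := hgt _ hmem
    simpa using this
  have hinv_mono : StrictMono ⇑(φ⁻¹) := by
    have := zpow_strictMono φ hm (-1)
    rwa [zpow_neg_one] at this
  have hinv_cont : Continuous ⇑(φ⁻¹) := perm_continuous _ hinv_mono
  obtain ⟨k₁, hk₁⟩ := escape_down (φ⁻¹) hinv_mono hinv_cont hinv_lt hinv_maps hmm hy
  obtain ⟨k₂, hk₂⟩ := escape_up φ hm hcont hgt hmaps hmm hy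
  have hiter_inv : ∀ k : ℕ, (⇑(φ⁻¹))^[k] m = (φ^(-(k:ℤ))) m := by
    intro k
    rw [zpow_neg, zpow_natCast, ← inv_pow, Equiv.Perm.coe_pow]
  have hiter : ∀ k : ℕ, (⇑φ)^[k] m = (φ^(k:ℤ)) m := by
    intro k
    rw [zpow_natCast, ← Equiv.Perm.coe_pow]
  have hS_ne : (φ^(-(k₁:ℤ))) m ≤ y := by rw [← hiter_inv]; exact le_of_lt hk₁
  have hS_bd : ∀ n : ℤ, (φ^n) m ≤ y → n ≤ k₂ := by
    intro n hn
    by_contra hcon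
    push_neg at hcon
    have : (φ^(k₂:ℤ)) m < (φ^n) m := hmono hcon
    rw [← hiter] at this
    linarith
  obtain ⟨n₀, hn₀, hmax⟩ := Int.exists_greatest_of_bdd ⟨k₂, hS_bd⟩ ⟨-(k₁:ℤ), hS_ne⟩
  refine ⟨n₀, ⟨hn₀, ?_⟩, ?_⟩
  · by_contra hcon
    push_neg at hcon
    exact absurd (hmax (n₀+1) hcon) (by omega)
  · rintro n' ⟨h1', h2'⟩
    have hle := hmax n' h1'
    by_contra hne
    have hlt : n' < n₀ := lt_of_le_of_ne hle hne
    have : (φ^(n'+1)) m ≤ (φ^n₀) m := hmono.monotone (by omega)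
    linarith [h2', hn₀]

end dynamics

/-- A "good" permutation: strictly monotone on `ℝ`, identity off `(0,1)`. -/
structure Pm (f : Equiv.Perm ℝ) : Prop where
  mono : StrictMono ⇑f
  ids : ∀ x ∉ Ioo (0:ℝ) 1, f x = x

lemma Pm.cont {f : Equiv.Perm ℝ} (hf : Pm f) : Continuous ⇑f := perm_continuous f hf.mono

lemma Pm.inv {f : Equiv.Perm ℝ} (hf : Pm f) : Pm f⁻¹ := by
  constructor
  · have := zpow_strictMono f hf.mono (-1)
    rwa [zpow_neg_one] at this
  · intro x hx
    have := hf.ids x hx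
    conv_lhs => rw [← this]
    simp

lemma Pm.mov_open {f : Equiv.Perm ℝ} (hf : Pm f) : IsOpen {y : ℝ | f y ≠ y} := by
  have : {y : ℝ | f y ≠ y} = {y : ℝ | f y = y}ᶜ := rfl
  rw [this]
  exact (isClosed_eq hf.cont continuous_id).isOpen_compl

lemma Pm.mov_sub {f : Equiv.Perm ℝ} (hf : Pm f) : {y : ℝ | f y ≠ y} ⊆ Ioo 0 1 := by
  intro y hy
  by_contra hc
  exact hy (hf.ids y hc)

noncomputable def av (f : Equiv.Perm ℝ) (x : ℝ) : ℝ := cA {y : ℝ | f y ≠ y} x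
noncomputable def bv (f : Equiv.Perm ℝ) (x : ℝ) : ℝ := cB {y : ℝ | f y ≠ y} x
noncomputable def mv (f : Equiv.Perm ℝ) (x : ℝ) : ℝ := (av f x + bv f x)/2

section onecomp
variable {f : Equiv.Perm ℝ} {x : ℝ}

lemma av_fix (hf : Pm f) (hx : f x ≠ x) : f (av f x) = av f x := by
  have := cA_mem hf.mov_open hf.mov_sub (show x ∈ {y : ℝ | f y ≠ y} from hx)
  simpa [av] using not_not.1 this

lemma bv_fix (hf : Pm f) (hx : f x ≠ x) : f (bv f x) = bv f x := by
  have := cB_mem hf.mov_open hf.mov_sub (show x ∈ {y : ℝ | f y ≠ y} from hx)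
  simpa [bv] using not_not.1 this

lemma av_lt (hf : Pm f) (hx : f x ≠ x) : av f x < x :=
  cA_lt hf.mov_open hf.mov_sub hx

lemma lt_bv (hf : Pm f) (hx : f x ≠ x) : x < bv f x :=
  lt_cB hf.mov_open hf.mov_sub hx

lemma av_nonneg' (hf : Pm f) (hx : f x ≠ x) : 0 ≤ av f x := cA_nonneg hf.mov_sub hx

lemma bv_le_one' (hf : Pm f) (hx : f x ≠ x) : bv f x ≤ 1 := cB_le_one hf.mov_sub hx

lemma ioo_nf (hf : Pm f) (hx : f x ≠ x) : ∀ y ∈ Ioo (av f x) (bv f x), f y ≠ y :=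
  fun y hy => ioo_sub hf.mov_open hf.mov_sub hx hy

lemma mem_own (hf : Pm f) (hx : f x ≠ x) : x ∈ Ioo (av f x) (bv f x) :=
  ⟨av_lt hf hx, lt_bv hf hx⟩

lemma mv_mem (hf : Pm f) (hx : f x ≠ x) : mv f x ∈ Ioo (av f x) (bv f x) := by
  have := lt_trans (av_lt hf hx) (lt_bv hf hx)
  constructor <;> (simp only [mv]; linarith)

lemma mv_nf (hf : Pm f) (hx : f x ≠ x) : f (mv f x) ≠ mv f x :=
  ioo_nf hf hx _ (mv_mem hf hx)

lemma comp_congr' (hf : Pm f) (hx : f x ≠ x) {y : ℝ} (hy : y ∈ Ioo (av f x) (bv f x)) :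
    av f y = av f x ∧ bv f y = bv f x :=
  comp_congr hf.mov_open hf.mov_sub hx hy

lemma comp_eq' (hf : Pm f) {a b : ℝ} (ha : f a = a) (hb : f b = b)
    (hx2 : x ∈ Ioo a b) (hnf : ∀ y ∈ Ioo a b, f y ≠ y) : av f x = a ∧ bv f x = b :=
  comp_eq hf.mov_sub (show a ∉ {y : ℝ | f y ≠ y} from not_not.2 ha)
    (not_not.2 hb) hx2 hnf

lemma comp_cover' (hf : Pm f) (hx : f x ≠ x) :
    ∃ q : ℚ, f (q:ℝ) ≠ (q:ℝ) ∧ x ∈ Ioo (av f (q:ℝ)) (bv f (q:ℝ)) :=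
  comp_cover hf.mov_open hf.mov_sub hx

lemma sign_const (hf : Pm f) (hx : f x ≠ x) {y : ℝ} (hy : y ∈ Ioo (av f x) (bv f x)) :
    (x < f x ↔ y < f y) := by
  have key : ∀ u v : ℝ, u ∈ Ioo (av f x) (bv f x) → v ∈ Ioo (av f x) (bv f x) →
      u < f u → f v < v → False := by
    intro u v hu hv huf hvf
    set c : ℝ → ℝ := fun t => f t - t with hc
    have hccont : ContinuousOn c (uIcc u v) := (hf.cont.sub continuous_id).continuousOn
    have h0 : (0:ℝ) ∈ uIcc (c u) (c v) := by
      rw [mem_uIcc]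
      right
      constructor
      · simp only [hc]; linarith
      · simp only [hc]; linarith
    obtain ⟨z, hz, hz0⟩ := intermediate_value_uIcc hccont h0
    have hzIoo : z ∈ Ioo (av f x) (bv f x) := by
      rw [mem_uIcc] at hz
      rcases hz with ⟨h1, h2⟩ | ⟨h1, h2⟩
      · exact ⟨lt_of_lt_of_le hu.1 h1, lt_of_le_of_lt h2 hv.2⟩
      · exact ⟨lt_of_lt_of_le hv.1 h1, lt_of_le_of_lt h2 hu.2⟩
    refine ioo_nf hf hx z hzIoo ?_
    simp only [hc] at hz0
    linarith
  constructor
  · intro h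
    rcases lt_trichotomy y (f y) with h' | h' | h'
    · exact h'
    · exact absurd h'.symm (ioo_nf hf hx y hy)
    · exact absurd (key x y (mem_own hf hx) hy h h') (fun k => k)
  · intro h
    rcases lt_trichotomy x (f x) with h' | h' | h'
    · exact h'
    · exact absurd h'.symm hx
    · exact absurd (key y x hy (mem_own hf hx) h h') (fun k => k)

end onecomp

/-- Full hypothesis bundle for the conjugacy construction. -/
structure Gd (f g H : Equiv.Perm ℝ) : Prop where
  pf : Pm f
  pg : Pm g
  pH : Pm H
  cj : ∀ x, H (f x) = g (H x)
  lnf : LN ⇑f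
  lnfi : LN ⇑f⁻¹
  lng : LN ⇑g
  lngi : LN ⇑g⁻¹
  nullf : volume {x : ℝ | x ∈ Icc (0:ℝ) 1 ∧ f x = x} = 0
  nullg : volume {x : ℝ | x ∈ Icc (0:ℝ) 1 ∧ g x = x} = 0

namespace Gd
variable {f g H : Equiv.Perm ℝ}

lemma swap (G : Gd f g H) : Gd g f H⁻¹ := by
  refine ⟨G.pg, G.pf, G.pH.inv, ?_, G.lng, G.lngi, G.lnf, G.lnfi, G.nullg, G.nullf⟩
  intro x
  have := G.cj (H⁻¹ x)
  have h2 : H (H⁻¹ x) = x := by simp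
  rw [h2] at this
  calc H⁻¹ (g x) = H⁻¹ (H (f (H⁻¹ x))) := by rw [this]
    _ = f (H⁻¹ x) := by simp

lemma fix_H (G : Gd f g H) {x : ℝ} (hx : f x = x) : g (H x) = H x := by
  rw [← G.cj, hx]

lemma nf_H (G : Gd f g H) {x : ℝ} (hx : f x ≠ x) : g (H x) ≠ H x := by
  intro hc
  rw [← G.cj] at hc
  exact hx (H.injective hc)

lemma av_H (G : Gd f g H) {x : ℝ} (hx : f x ≠ x) :
    av g (H x) = H (av f x) ∧ bv g (H x) = H (bv f x) := by
  refine comp_eq' G.pg (G.fix_H (av_fix G.pf hx)) (G.fix_H (bv_fix G.pf hx)) ?_ ?_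
  · exact ⟨G.pH.mono (av_lt G.pf hx), G.pH.mono (lt_bv G.pf hx)⟩
  · intro w hw
    have hw' : H⁻¹ w ∈ Ioo (av f x) (bv f x) := by
      constructor
      · have := (symm_strictMono H G.pH.mono) hw.1
        simpa using this
      · have := (symm_strictMono H G.pH.mono) hw.2
        simpa using this
    have hnf := ioo_nf G.pf hx _ hw'
    have := G.nf_H hnf
    simpa using this

lemma sign_H (G : Gd f g H) {x : ℝ} : (x < f x ↔ H x < g (H x)) := by
  rw [← G.cj]
  exact (G.pH.mono.lt_iff_lt).symm

end Gd

/-- The perm moving points of the component of `x` upwards (`f` or `f⁻¹`). -/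
noncomputable def dir (f : Equiv.Perm ℝ) (x : ℝ) : Equiv.Perm ℝ := if x < f x then f else f⁻¹

/-- The corresponding perm for the target side. -/
noncomputable def dirg (f g : Equiv.Perm ℝ) (x : ℝ) : Equiv.Perm ℝ := if x < f x then g else g⁻¹

section dirlem
variable {f g H : Equiv.Perm ℝ} {x : ℝ}

lemma dir_mono (hf : Pm f) : StrictMono ⇑(dir f x) := by
  unfold dir; split_ifs
  · exact hf.mono
  · exact hf.inv.mono

lemma dirg_mono (hg : Pm g) : StrictMono ⇑(dirg f g x) := by
  unfold dirg; split_ifs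
  · exact hg.mono
  · exact hg.inv.mono

lemma dir_fix (hf : Pm f) {w : ℝ} (hw : f w = w) : dir f x w = w := by
  unfold dir; split_ifs
  · exact hw
  · have h2 : f⁻¹ (f w) = w := by simp
    rwa [hw] at h2

lemma dirg_fix (hg : Pm g) {w : ℝ} (hw : g w = w) : dirg f g x w = w := by
  unfold dirg; split_ifs
  · exact hw
  · have h2 : g⁻¹ (g w) = w := by simp
    rwa [hw] at h2

lemma dir_gt (hf : Pm f) (hx : f x ≠ x) :
    ∀ y ∈ Ioo (av f x) (bv f x), y < dir f x y := by
  intro y hy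
  unfold dir; split_ifs with h
  · exact (sign_const hf hx hy).1 h
  · have hylt : f y < y := by
      rcases lt_trichotomy y (f y) with h' | h' | h'
      · exact absurd ((sign_const hf hx hy).2 h') h
      · exact absurd h'.symm (ioo_nf hf hx y hy)
      · exact h'
    have := hf.inv.mono hylt
    simpa using this

lemma dirg_gt (G : Gd f g H) (hx : f x ≠ x) :
    ∀ w ∈ Ioo (av g (H x)) (bv g (H x)), w < dirg f g x w := by
  intro w hw
  have hHnf : g (H x) ≠ H x := G.nf_H hx
  unfold dirg; split_ifs with h
  · exact (sign_const G.pg hHnf hw).1 (G.sign_H.1 h)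
  · have hwlt : g w < w := by
      rcases lt_trichotomy w (g w) with h' | h' | h'
      · exact absurd (G.sign_H.2 ((sign_const G.pg hHnf hw).2 h')) h
      · exact absurd h'.symm (ioo_nf G.pg hHnf w hw)
      · exact h'
    have := G.pg.inv.mono hwlt
    simpa using this

lemma dir_cont (hf : Pm f) : Continuous ⇑(dir f x) := perm_continuous _ (dir_mono hf)

end dirlem

noncomputable def mw (f g H : Equiv.Perm ℝ) (x : ℝ) : ℝ := (H (av f x) + H (bv f x))/2

noncomputable def aff (f g H : Equiv.Perm ℝ) (x t : ℝ) : ℝ :=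
  mw f g H x + (t - mv f x) *
    ((dirg f g x (mw f g H x) - mw f g H x) / (dir f x (mv f x) - mv f x))

open scoped Classical in
noncomputable def nn (f : Equiv.Perm ℝ) (x : ℝ) : ℤ :=
  if h : ∃ n : ℤ, ((dir f x)^n) (mv f x) ≤ x ∧ x < ((dir f x)^(n+1)) (mv f x) then
    h.choose else 0

noncomputable def conjF (f g H : Equiv.Perm ℝ) (x : ℝ) : ℝ :=
  if f x = x then H x else
    ((dirg f g x)^(nn f x)) (aff f g H x (((dir f x)^(-(nn f x))) x))

section constr
variable {f g H : Equiv.Perm ℝ} {x : ℝ}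

lemma mw_eq (G : Gd f g H) (hx : f x ≠ x) : mw f g H x = mv g (H x) := by
  obtain ⟨h1, h2⟩ := G.av_H hx
  rw [mv, h1, h2, mw]

lemma mw_mem (G : Gd f g H) (hx : f x ≠ x) :
    mw f g H x ∈ Ioo (av g (H x)) (bv g (H x)) := by
  rw [mw_eq G hx]
  exact mv_mem G.pg (G.nf_H hx)

lemma mw_mem' (G : Gd f g H) (hx : f x ≠ x) :
    mw f g H x ∈ Ioo (H (av f x)) (H (bv f x)) := by
  obtain ⟨h1, h2⟩ := G.av_H hx
  have := mw_mem G hx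
  rwa [h1, h2] at this

lemma den_pos (G : Gd f g H) (hx : f x ≠ x) : 0 < dir f x (mv f x) - mv f x :=
  sub_pos.2 (dir_gt G.pf hx _ (mv_mem G.pf hx))

lemma num_pos (G : Gd f g H) (hx : f x ≠ x) :
    0 < dirg f g x (mw f g H x) - mw f g H x :=
  sub_pos.2 (dirg_gt G hx _ (mw_mem G hx))

lemma slope_pos (G : Gd f g H) (hx : f x ≠ x) :
    0 < (dirg f g x (mw f g H x) - mw f g H x) / (dir f x (mv f x) - mv f x) :=
  div_pos (num_pos G hx) (den_pos G hx)

lemma aff_strictMono (G : Gd f g H) (hx : f x ≠ x) : StrictMono (aff f g H x) := by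
  intro t1 t2 ht
  unfold aff
  have := slope_pos G hx
  have h2 : t1 - mv f x < t2 - mv f x := by linarith
  nlinarith [mul_lt_mul_of_pos_right h2 this]

lemma aff_m (G : Gd f g H) (hx : f x ≠ x) : aff f g H x (mv f x) = mw f g H x := by
  unfold aff; ring

lemma aff_fm (G : Gd f g H) (hx : f x ≠ x) :
    aff f g H x (dir f x (mv f x)) = dirg f g x (mw f g H x) := by
  unfold aff
  have hden := den_pos G hx
  field_simp
  ring

lemma nn_spec (G : Gd f g H) (hx : f x ≠ x) :
    ((dir f x)^(nn f x)) (mv f x) ≤ x ∧ x < ((dir f x)^(nn f x + 1)) (mv f x) := by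
  have hex := floor_ex (dir f x) (dir_mono G.pf) (dir_cont G.pf)
    (dir_fix G.pf (av_fix G.pf hx)) (dir_fix G.pf (bv_fix G.pf hx))
    (dir_gt G.pf hx) (mv_mem G.pf hx) (mem_own G.pf hx)
  classical
  rw [nn]
  rw [dif_pos hex.exists]
  exact hex.exists.choose_spec

lemma nn_unique (G : Gd f g H) (hx : f x ≠ x) {n : ℤ}
    (h1 : ((dir f x)^n) (mv f x) ≤ x) (h2 : x < ((dir f x)^(n+1)) (mv f x)) :
    n = nn f x := by
  have hex := floor_ex (dir f x) (dir_mono G.pf) (dir_cont G.pf)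
    (dir_fix G.pf (av_fix G.pf hx)) (dir_fix G.pf (bv_fix G.pf hx))
    (dir_gt G.pf hx) (mv_mem G.pf hx) (mem_own G.pf hx)
  exact hex.unique ⟨h1, h2⟩ (nn_spec G hx)

/-- All data of the construction agree across a component. -/
lemma comp_data (G : Gd f g H) (hx : f x ≠ x) {y : ℝ} (hy : y ∈ Ioo (av f x) (bv f x)) :
    av f y = av f x ∧ bv f y = bv f x ∧ mv f y = mv f x ∧ dir f y = dir f x ∧
      dirg f g y = dirg f g x ∧ mw f g H y = mw f g H x ∧ aff f g H y = aff f g H x := by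
  obtain ⟨ha, hb⟩ := comp_congr' G.pf hx hy
  have hmv : mv f y = mv f x := by rw [mv, ha, hb, mv]
  have hsign : x < f x ↔ y < f y := sign_const G.pf hx hy
  have hdir : dir f y = dir f x := by
    unfold dir
    by_cases h : x < f x
    · rw [if_pos (hsign.1 h), if_pos h]
    · rw [if_neg (fun h' => h (hsign.2 h')), if_neg h]
  have hdirg : dirg f g y = dirg f g x := by
    unfold dirg
    by_cases h : x < f x
    · rw [if_pos (hsign.1 h), if_pos h]
    · rw [if_neg (fun h' => h (hsign.2 h')), if_neg h]
  have hmw : mw f g H y = mw f g H x := by rw [mw, ha, hb, mw]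
  refine ⟨ha, hb, hmv, hdir, hdirg, hmw, ?_⟩
  funext t
  rw [aff, hmw, hmv, hdir, hdirg, aff]

lemma orbit_mem_comp (G : Gd f g H) (hx : f x ≠ x) (n : ℤ) :
    ((dir f x)^n) (mv f x) ∈ Ioo (av f x) (bv f x) :=
  orb_mem (dir f x) (dir_mono G.pf) (dir_fix G.pf (av_fix G.pf hx))
    (dir_fix G.pf (bv_fix G.pf hx)) n _ (mv_mem G.pf hx)

lemma piece_sub (G : Gd f g H) (hx : f x ≠ x) (n : ℤ) {y : ℝ}
    (h1 : ((dir f x)^n) (mv f x) ≤ y) (h2 : y < ((dir f x)^(n+1)) (mv f x)) :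
    y ∈ Ioo (av f x) (bv f x) :=
  ⟨lt_of_lt_of_le (orbit_mem_comp G hx n).1 h1,
   lt_trans h2 (orbit_mem_comp G hx (n+1)).2⟩

lemma conjF_piece (G : Gd f g H) (hx : f x ≠ x) (n : ℤ) {y : ℝ}
    (h1 : ((dir f x)^n) (mv f x) ≤ y) (h2 : y < ((dir f x)^(n+1)) (mv f x)) :
    conjF f g H y = ((dirg f g x)^n) (aff f g H x (((dir f x)^(-n)) y)) := by
  have hyIoo := piece_sub G hx n h1 h2
  have hynf : f y ≠ y := ioo_nf G.pf hx y hyIoo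
  obtain ⟨ha, hb, hmv, hdir, hdirg, hmw, haff⟩ := comp_data G hx hyIoo
  have hnn : n = nn f y := by
    refine nn_unique G hynf ?_ ?_
    · rw [hdir, hmv]; exact h1
    · rw [hdir, hmv]; exact h2
  rw [conjF, if_neg hynf, ← hnn, hdirg, haff, hdir]

lemma zpow_cancel (φ : Equiv.Perm ℝ) (n : ℤ) (t : ℝ) : ((φ^(-n))) ((φ^n) t) = t := by
  rw [← zpow_add_apply]
  simp

lemma zpow_shift (φ : Equiv.Perm ℝ) (n : ℤ) (t : ℝ) : ((φ^(-n))) ((φ^(n+1)) t) = φ t := by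
  rw [← zpow_add_apply]
  have : -n + (n+1) = 1 := by ring
  rw [this, zpow_one]

lemma conjF_bounds (G : Gd f g H) (hx : f x ≠ x) (n : ℤ) {y : ℝ}
    (h1 : ((dir f x)^n) (mv f x) ≤ y) (h2 : y < ((dir f x)^(n+1)) (mv f x)) :
    ((dirg f g x)^n) (mw f g H x) ≤ conjF f g H y ∧
    conjF f g H y < ((dirg f g x)^(n+1)) (mw f g H x) ∧
    conjF f g H y ∈ Ioo (av g (H x)) (bv g (H x)) := by
  set φ := dir f x
  set ψ := dirg f g x
  set m := mv f x
  set m' := mw f g H x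
  have hz1 : m ≤ (φ^(-n)) y := by
    have := (zpow_strictMono φ (dir_mono G.pf) (-n)).monotone h1
    rwa [zpow_cancel] at this
  have hz2 : (φ^(-n)) y < φ m := by
    have := (zpow_strictMono φ (dir_mono G.pf) (-n)) h2
    rwa [zpow_shift] at this
  have haz1 : m' ≤ aff f g H x ((φ^(-n)) y) := by
    have := (aff_strictMono G hx).monotone hz1
    rwa [aff_m G hx] at this
  have haz2 : aff f g H x ((φ^(-n)) y) < ψ m' := by
    have := (aff_strictMono G hx) hz2
    rwa [aff_fm G hx] at this
  have hamem : aff f g H x ((φ^(-n)) y) ∈ Ioo (av g (H x)) (bv g (H x)) := by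
    constructor
    · exact lt_of_lt_of_le (mw_mem G hx).1 haz1
    · refine lt_trans haz2 ?_
      have : ψ m' ∈ Ioo (av g (H x)) (bv g (H x)) := by
        have := orb_mem ψ (dirg_mono G.pg) (dirg_fix G.pg (av_fix G.pg (G.nf_H hx)))
          (dirg_fix G.pg (bv_fix G.pg (G.nf_H hx))) 1 _ (mw_mem G hx)
        simpa using this
      exact this.2
  rw [conjF_piece G hx n h1 h2]
  refine ⟨(zpow_strictMono ψ (dirg_mono G.pg) n).monotone haz1, ?_, ?_⟩
  · have := (zpow_strictMono ψ (dirg_mono G.pg) n) haz2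
    calc (ψ^n) (aff f g H x ((φ^(-n)) y)) < (ψ^n) (ψ m') := this
      _ = (ψ^(n+1)) m' := by
          rw [show ψ m' = (ψ^(1:ℤ)) m' by simp, ← zpow_add_apply]
  · exact orb_mem ψ (dirg_mono G.pg) (dirg_fix G.pg (av_fix G.pg (G.nf_H hx)))
      (dirg_fix G.pg (bv_fix G.pg (G.nf_H hx))) n _ hamem

lemma conjF_mem (G : Gd f g H) (hx : f x ≠ x) {y : ℝ} (hy : y ∈ Ioo (av f x) (bv f x)) :
    conjF f g H y ∈ Ioo (H (av f x)) (H (bv f x)) := by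
  have hynf : f y ≠ y := ioo_nf G.pf hx y hy
  obtain ⟨hs1, hs2⟩ := nn_spec G hynf
  obtain ⟨ha, hb, hmv, hdir, hdirg, hmw, haff⟩ := comp_data G hx hy
  rw [hdir, hmv] at hs1 hs2
  have := (conjF_bounds G hx (nn f y) hs1 hs2).2.2
  obtain ⟨e1, e2⟩ := G.av_H hx
  rwa [e1, e2] at this

end constr

section mainlem
variable {f g H : Equiv.Perm ℝ} {x : ℝ}

lemma conjF_fix (hx : f x = x) : conjF f g H x = H x := by
  rw [conjF, if_pos hx]

lemma conjF_id_outside (G : Gd f g H) : ∀ x ∉ Ioo (0:ℝ) 1, conjF f g H x = x := by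
  intro x hx
  rw [conjF, if_pos (G.pf.ids x hx)]
  exact G.pH.ids x hx

lemma fix_le_av {y : ℝ} (hxf : f x = x) (hxy : x ≤ y) (hy : f y ≠ y) : x ≤ av f y :=
  le_csSup ⟨y, fun z hz => hz.2⟩ ⟨not_not.2 hxf, hxy⟩

lemma bv_le_fix {y : ℝ} (hxf : f x = x) (hxy : y ≤ x) (hy : f y ≠ y) : bv f y ≤ x :=
  csInf_le ⟨y, fun z hz => hz.2⟩ ⟨not_not.2 hxf, hxy⟩

lemma orbg_strictMono (G : Gd f g H) (hx : f x ≠ x) :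
    StrictMono (fun n : ℤ => ((dirg f g x)^n) (mw f g H x)) :=
  orb_strictMono (dirg f g x) (dirg_mono G.pg) (dirg_fix G.pg (av_fix G.pg (G.nf_H hx)))
    (dirg_fix G.pg (bv_fix G.pg (G.nf_H hx))) (dirg_gt G hx) (mw_mem G hx)

lemma conjF_strictMono (G : Gd f g H) : StrictMono (conjF f g H) := by
  intro x y hxy
  by_cases hx : f x = x <;> by_cases hy : f y = y
  · rw [conjF_fix hx, conjF_fix hy]
    exact G.pH.mono hxy
  · -- x fixed, y moving
    rw [conjF_fix hx]
    have h1 : x ≤ av f y := fix_le_av hx (le_of_lt hxy) hy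
    have h2 := (conjF_mem G hy (mem_own G.pf hy)).1
    exact lt_of_le_of_lt (G.pH.mono.monotone h1) h2
  · -- x moving, y fixed
    rw [conjF_fix hy]
    have h1 : bv f x ≤ y := bv_le_fix hy (le_of_lt hxy) hx
    have h2 := (conjF_mem G hx (mem_own G.pf hx)).2
    exact lt_of_lt_of_le h2 (G.pH.mono.monotone h1)
  · -- both moving
    by_cases hyc : y ∈ Ioo (av f x) (bv f x)
    · -- same component
      obtain ⟨ha, hb, hmv, hdir, hdirg, hmw, haff⟩ := comp_data G hx hyc
      obtain ⟨hy1, hy2⟩ := nn_spec G hy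
      rw [hdir, hmv] at hy1 hy2
      obtain ⟨hx1, hx2⟩ := nn_spec G hx
      set φ := dir f x
      set ψ := dirg f g x
      set m := mv f x
      set m' := mw f g H x
      set n1 := nn f x
      set n2 := nn f y
      have horb := orb_strictMono φ (dir_mono G.pf) (dir_fix G.pf (av_fix G.pf hx))
        (dir_fix G.pf (bv_fix G.pf hx)) (dir_gt G.pf hx) (mv_mem G.pf hx)
      have hn12 : n1 ≤ n2 := by
        by_contra hcon
        push_neg at hcon
        have : (φ^(n2+1)) m ≤ (φ^n1) m := horb.monotone (by omega)
        linarith [hy2, hx1]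
      rcases eq_or_lt_of_le hn12 with heq | hlt
      · -- same piece
        rw [conjF_piece G hx n1 hx1 hx2, conjF_piece G hx n2 hy1 hy2, ← heq]
        refine (zpow_strictMono ψ (dirg_mono G.pg) n1) ?_
        refine aff_strictMono G hx ?_
        exact (zpow_strictMono φ (dir_mono G.pf) (-n1)) hxy
      · -- different pieces
        have hb1 := (conjF_bounds G hx n1 hx1 hx2).2.1
        have hb2 := (conjF_bounds G hx n2 hy1 hy2).1
        have hmid : (ψ^(n1+1)) m' ≤ (ψ^n2) m' := (orbg_strictMono G hx).monotone (by omega)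
        linarith
    · -- different components
      have hbvle : bv f x ≤ y := by
        by_contra hcon
        push_neg at hcon
        exact hyc ⟨lt_trans (av_lt G.pf hx) hxy, hcon⟩
      have h1 := (conjF_mem G hx (mem_own G.pf hx)).2
      have h2 : bv f x ≤ av f y := fix_le_av (bv_fix G.pf hx) hbvle hy
      have h3 := (conjF_mem G hy (mem_own G.pf hy)).1
      calc conjF f g H x < H (bv f x) := h1
        _ ≤ H (av f y) := G.pH.mono.monotone h2
        _ < conjF f g H y := h3

lemma conjF_dir (G : Gd f g H) (hx : f x ≠ x) :
    conjF f g H (dir f x x) = dirg f g x (conjF f g H x) := by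
  set φ := dir f x
  set ψ := dirg f g x
  set m := mv f x
  obtain ⟨h1, h2⟩ := nn_spec G hx
  set n := nn f x
  have h1' : (φ^(n+1)) m ≤ φ x := by
    rw [zpow_one_add_apply]
    exact (dir_mono G.pf).monotone h1
  have h2' : φ x < (φ^(n+1+1)) m := by
    rw [zpow_one_add_apply]
    exact (dir_mono G.pf) h2
  rw [conjF_piece G hx (n+1) h1' h2', conjF_piece G hx n h1 h2]
  have hzz : (φ^(-(n+1))) (φ x) = (φ^(-n)) x := by
    rw [show φ x = (φ^(1:ℤ)) x by simp, ← zpow_add_apply]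
    norm_num
  rw [hzz, zpow_one_add_apply]

lemma f_maps_comp (G : Gd f g H) (hx : f x ≠ x) {y : ℝ} (hy : y ∈ Ioo (av f x) (bv f x)) :
    f y ∈ Ioo (av f x) (bv f x) := by
  constructor
  · have := G.pf.mono hy.1
    rwa [av_fix G.pf hx] at this
  · have := G.pf.mono hy.2
    rwa [bv_fix G.pf hx] at this

lemma conjF_conj (G : Gd f g H) : ∀ x, conjF f g H (f x) = g (conjF f g H x) := by
  intro x
  by_cases hx : f x = x
  · rw [hx, conjF_fix hx]
    exact (G.fix_H hx).symm
  · by_cases hdi : x < f x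
    · have e1 : dir f x = f := if_pos hdi
      have e2 : dirg f g x = g := if_pos hdi
      have := conjF_dir G hx
      rwa [e1, e2] at this
    · -- downward component : apply at the point f x
      have hfx : f (f x) ≠ f x := fun hc => hx (f.injective hc)
      have hfxmem : f x ∈ Ioo (av f x) (bv f x) := f_maps_comp G hx (mem_own G.pf hx)
      obtain ⟨ha, hb, hmv, hdir, hdirg, hmw, haff⟩ := comp_data G hx hfxmem
      have hsign : ¬ (f x < f (f x)) := by
        intro hcon
        exact hdi ((sign_const G.pf hx hfxmem).2 hcon)
      have e1 : dir f (f x) = f⁻¹ := if_neg hsign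
      have e3 : dirg f g (f x) = g⁻¹ := if_neg hsign
      have := conjF_dir G hfx
      rw [e1, e3] at this
      have hff : f⁻¹ (f x) = x := by simp
      rw [hff] at this
      rw [this]
      simp
  
lemma aff_inv (G : Gd f g H) {y : ℝ} (hy : g y ≠ y) (t : ℝ) :
    aff f g H (H⁻¹ y) (aff g f H⁻¹ y t) = t := by
  have G' := G.swap
  have hx0 : f (H⁻¹ y) ≠ H⁻¹ y := G'.nf_H hy
  have hH : H (H⁻¹ y) = y := by simp
  -- identifications
  have R2 : mw f g H (H⁻¹ y) = mv g y := by
    rw [mw_eq G hx0, hH]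
  have R3 : mw g f H⁻¹ y = mv f (H⁻¹ y) := mw_eq G' hy
  have R1 : dirg f g (H⁻¹ y) = dir g y := by
    unfold dirg dir
    by_cases h : H⁻¹ y < f (H⁻¹ y)
    · rw [if_pos h, if_pos ?_]
      have := (G.sign_H (x := H⁻¹ y)).1 h
      rwa [hH] at this
    · rw [if_neg h, if_neg ?_]
      intro hcon
      refine h ((G.sign_H (x := H⁻¹ y)).2 ?_)
      rwa [hH]
  have R1' : dirg g f y = dir f (H⁻¹ y) := by
    unfold dirg dir
    by_cases h : y < g y
    · rw [if_pos h, if_pos ?_]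
      refine (G.sign_H (x := H⁻¹ y)).2 ?_
      rwa [hH]
    · rw [if_neg h, if_neg ?_]
      intro hcon
      have := (G.sign_H (x := H⁻¹ y)).1 hcon
      rw [hH] at this
      exact h this
  have hp := num_pos G hx0   -- dirg f g (H⁻¹y) (mw f g H (H⁻¹y)) - mw > 0
  have hq := den_pos G hx0
  have hp' := num_pos G' hy
  have hq' := den_pos G' hy
  rw [R2, R1] at hp
  rw [R3, R1'] at hp'
  -- hq' : dir g y (mv g y) - mv g y > 0  = same as hp
  unfold aff
  rw [R2, R1, R3, R1']
  set P := dir g y (mv g y) - mv g y with hP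
  set Q := dir f (H⁻¹ y) (mv f (H⁻¹ y)) - mv f (H⁻¹ y) with hQ
  have hPpos : 0 < P := hq'
  have hQpos : 0 < Q := hq
  field_simp
  ring

lemma conjF_inv (G : Gd f g H) : ∀ y, conjF f g H (conjF g f H⁻¹ y) = y := by
  intro y
  by_cases hy : g y = y
  · have G' := G.swap
    have e1 : conjF g f H⁻¹ y = H⁻¹ y := conjF_fix hy
    rw [e1]
    have hfix : f (H⁻¹ y) = H⁻¹ y := G'.fix_H hy
    rw [conjF_fix hfix]
    simp
  · have G' := G.swap
    have hx0 : f (H⁻¹ y) ≠ H⁻¹ y := G'.nf_H hy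
    have hH : H (H⁻¹ y) = y := by simp
    set x0 := H⁻¹ y with hx0def
    -- identifications (same as in aff_inv)
    have R1 : dirg f g x0 = dir g y := by
      unfold dirg dir
      by_cases h : x0 < f x0
      · rw [if_pos h, if_pos ?_]
        have := (G.sign_H (x := x0)).1 h
        rwa [hH] at this
      · rw [if_neg h, if_neg ?_]
        intro hcon
        refine h ((G.sign_H (x := x0)).2 ?_)
        rwa [hH]
    have R1' : dirg g f y = dir f x0 := by
      unfold dirg dir
      by_cases h : y < g y
      · rw [if_pos h, if_pos ?_]
        refine (G.sign_H (x := x0)).2 ?_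
        rwa [hH]
      · rw [if_neg h, if_neg ?_]
        intro hcon
        have := (G.sign_H (x := x0)).1 hcon
        rw [hH] at this
        exact h this
    have R3 : mw g f H⁻¹ y = mv f x0 := mw_eq G' hy
    set ψ := dir g y with hψ
    set φ := dir f x0 with hφ
    set μ := mv g y with hμ
    obtain ⟨hs1, hs2⟩ := nn_spec G' hy
    set n := nn g y
    -- the value z
    have hz : conjF g f H⁻¹ y = (φ^n) (aff g f H⁻¹ y ((ψ^(-n)) y)) := by
      rw [conjF, if_neg hy, ← R1']
    -- floor data for z
    have hw1 : μ ≤ (ψ^(-n)) y := by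
      have := (zpow_strictMono ψ (dir_mono G.pg) (-n)).monotone hs1
      rwa [zpow_cancel] at this
    have hw2 : (ψ^(-n)) y < ψ μ := by
      have := (zpow_strictMono ψ (dir_mono G.pg) (-n)) hs2
      rwa [zpow_shift] at this
    have haffm : aff g f H⁻¹ y μ = mv f x0 := by
      have := aff_m G' hy
      rwa [R3] at this
    have hafffm : aff g f H⁻¹ y (ψ μ) = φ (mv f x0) := by
      have := aff_fm G' hy
      rwa [R3, R1'] at this
    have ht1 : mv f x0 ≤ aff g f H⁻¹ y ((ψ^(-n)) y) := by
      have := (aff_strictMono G' hy).monotone hw1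
      rwa [haffm] at this
    have ht2 : aff g f H⁻¹ y ((ψ^(-n)) y) < φ (mv f x0) := by
      have := (aff_strictMono G' hy) hw2
      rwa [hafffm] at this
    have hz1 : (φ^n) (mv f x0) ≤ conjF g f H⁻¹ y := by
      rw [hz]
      exact (zpow_strictMono φ (dir_mono G.pf) n).monotone ht1
    have hz2 : conjF g f H⁻¹ y < (φ^(n+1)) (mv f x0) := by
      rw [hz]
      have h5 := (zpow_strictMono φ (dir_mono G.pf) n) ht2
      rwa [show φ (mv f x0) = (φ^(1:ℤ)) (mv f x0) by simp, ← zpow_add_apply] at h5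
    -- main computation
    rw [conjF_piece G hx0 n hz1 hz2, hz, zpow_cancel]
    have AI := aff_inv G hy ((ψ^(-n)) y)
    rw [← hx0def] at AI
    rw [AI, R1]
    rw [← zpow_add_apply]
    simp
end mainlem

section lnpart
variable {f g H : Equiv.Perm ℝ} {x : ℝ}

lemma pm_zpow (hf : Pm f) (k : ℤ) : Pm (f^k) :=
  ⟨zpow_strictMono f hf.mono k, fun x hx => zpow_fixed f (hf.ids x hx) k⟩

lemma img_Icc (hf : Pm f) {E : Set ℝ} (hE : E ⊆ Icc 0 1) : ⇑f '' E ⊆ Icc 0 1 := by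
  rintro _ ⟨z, hz, rfl⟩
  have h0 : f 0 = 0 := hf.ids 0 (by norm_num)
  have h1 : f 1 = 1 := hf.ids 1 (by norm_num)
  exact ⟨h0 ▸ hf.mono.monotone (hE hz).1, h1 ▸ hf.mono.monotone (hE hz).2⟩

lemma ln_zpow (hf : Pm f) (h1 : LN ⇑f) (h2 : LN ⇑f⁻¹) : ∀ k : ℤ, LN ⇑(f^k) := by
  intro k
  induction k using Int.induction_on with
  | zero => intro E hE hE0; simpa using hE0
  | succ k ih =>
      intro E hE hE0
      have : ⇑(f^((k:ℤ)+1)) '' E = ⇑f '' (⇑(f^(k:ℤ)) '' E) := by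
        rw [← image_comp]
        congr 1
        rw [← Equiv.Perm.coe_mul, show (k:ℤ)+1 = 1 + (k:ℤ) by ring, zpow_add, zpow_one]
      rw [this]
      exact h1 _ (img_Icc (pm_zpow hf k) hE) (ih E hE hE0)
  | pred k ih =>
      intro E hE hE0
      have : ⇑(f^(-(k:ℤ)-1)) '' E = ⇑(f^(-(k:ℤ))) '' (⇑f⁻¹ '' E) := by
        rw [← image_comp]
        congr 1
        rw [← Equiv.Perm.coe_mul, show -(k:ℤ)-1 = -(k:ℤ) + (-1) by ring, zpow_add, zpow_neg_one]
      rw [this]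
      exact ih _ (img_Icc hf.inv hE) (h2 E hE hE0)

lemma pm_dir (hf : Pm f) : Pm (dir f x) := by
  unfold dir; split_ifs
  · exact hf
  · exact hf.inv

lemma pm_dirg (hg : Pm g) : Pm (dirg f g x) := by
  unfold dirg; split_ifs
  · exact hg
  · exact hg.inv

lemma ln_dir_zpow (G : Gd f g H) (k : ℤ) : LN ⇑((dir f x)^k) := by
  unfold dir; split_ifs
  · exact ln_zpow G.pf G.lnf G.lnfi k
  · rw [inv_zpow']
    exact ln_zpow G.pf G.lnf G.lnfi (-k)

lemma ln_dirg_zpow (G : Gd f g H) (k : ℤ) : LN ⇑((dirg f g x)^k) := by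
  unfold dirg; split_ifs
  · exact ln_zpow G.pg G.lng G.lngi k
  · rw [inv_zpow']
    exact ln_zpow G.pg G.lng G.lngi (-k)

lemma acOn_affine (c d e : ℝ) (hc : 0 < c) : ACOn (fun t => d + (t - e)*c) 0 1 := by
  intro ε hε
  refine ⟨ε/c, div_pos hε hc, ?_⟩
  intro n u v huv hdisj hsum
  have : ∀ i, |(d + (v i - e)*c) - (d + (u i - e)*c)| = (v i - u i)*c := by
    intro i
    rw [show (d + (v i - e)*c) - (d + (u i - e)*c) = (v i - u i)*c by ring]
    exact abs_of_nonneg (mul_nonneg (sub_nonneg.2 (huv i).2.1) (le_of_lt hc))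
  calc (∑ i, |(d + (v i - e)*c) - (d + (u i - e)*c)|) = ∑ i, (v i - u i)*c := by
        exact Finset.sum_congr rfl (fun i _ => this i)
    _ = (∑ i, (v i - u i))*c := by rw [Finset.sum_mul]
    _ ≤ (ε/c)*c := by
        refine mul_le_mul_of_nonneg_right hsum (le_of_lt hc)
    _ = ε := by field_simp

lemma ln_aff (G : Gd f g H) (hx : f x ≠ x) : LN (aff f g H x) := by
  have hmono : Monotone (aff f g H x) := (aff_strictMono G hx).monotone
  have : aff f g H x = fun t => mw f g H x + (t - mv f x) *
      ((dirg f g x (mw f g H x) - mw f g H x) / (dir f x (mv f x) - mv f x)) := rfl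
  rw [this] at hmono ⊢
  exact luzinN_of_acOn _ hmono (acOn_affine _ _ _ (slope_pos G hx))

lemma conjF_LN (G : Gd f g H) : LN (conjF f g H) := by
  intro E hE hE0
  classical
  set Fix2 : Set ℝ := {w : ℝ | w ∈ Icc (0:ℝ) 1 ∧ g w = w} with hFix2
  set A : {q : ℚ // f (q:ℝ) ≠ (q:ℝ)} × ℤ → Set ℝ := fun i =>
    conjF f g H '' (E ∩ Ioo (av f (i.1:ℝ)) (bv f (i.1:ℝ)) ∩
      Ico ((dir f (i.1:ℝ) ^ i.2) (mv f (i.1:ℝ))) ((dir f (i.1:ℝ) ^ (i.2+1)) (mv f (i.1:ℝ))))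
    with hA
  have hcover : conjF f g H '' E ⊆ Fix2 ∪ ⋃ i, A i := by
    rintro _ ⟨z, hz, rfl⟩
    by_cases hzf : f z = z
    · left
      rw [conjF_fix hzf]
      refine ⟨img_Icc G.pH (fun w hw => hE hw) ⟨z, hz, rfl⟩, G.fix_H hzf⟩
    · right
      obtain ⟨q, hq, hzq⟩ := comp_cover' G.pf hzf
      obtain ⟨h1, h2⟩ := nn_spec G hzf
      obtain ⟨ha, hb, hmv, hdir, hdirg, hmw, haff⟩ := comp_data G hq hzq
      rw [hdir, hmv] at h1 h2
      refine mem_iUnion.2 ⟨(⟨q, hq⟩, nn f z), ?_⟩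
      exact ⟨z, ⟨⟨hz, hzq⟩, h1, h2⟩, rfl⟩
  have hA0 : ∀ i, volume (A i) = 0 := by
    rintro ⟨⟨q, hq⟩, n⟩
    set S := E ∩ Ioo (av f (q:ℝ)) (bv f (q:ℝ)) ∩
      Ico ((dir f (q:ℝ) ^ n) (mv f (q:ℝ))) ((dir f (q:ℝ) ^ (n+1)) (mv f (q:ℝ))) with hS
    set φ := dir f (q:ℝ)
    set ψ := dirg f g (q:ℝ)
    have himg : A (⟨q, hq⟩, n) ⊆
        ⇑(ψ^n) '' (aff f g H (q:ℝ) '' (⇑(φ^(-n)) '' S)) := by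
      rintro _ ⟨z, hzS, rfl⟩
      have := conjF_piece G hq n hzS.2.1 hzS.2.2
      rw [this]
      exact ⟨_, ⟨_, ⟨z, hzS, rfl⟩, rfl⟩, rfl⟩
    -- null chain
    have hSnull : volume S = 0 := measure_mono_null (fun z hz => hz.1.1) hE0
    have hSsub : S ⊆ Icc 0 1 := fun z hz => hE hz.1.1
    have h1 : volume (⇑(φ^(-n)) '' S) = 0 := ln_dir_zpow G (-n) S hSsub hSnull
    have hsub1 : ⇑(φ^(-n)) '' S ⊆ Icc 0 1 := img_Icc (pm_zpow (pm_dir G.pf) (-n)) hSsub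
    have h2 : volume (aff f g H (q:ℝ) '' (⇑(φ^(-n)) '' S)) = 0 :=
      ln_aff G hq _ hsub1 h1
    -- the affine image is inside [0,1]
    have hsub2 : aff f g H (q:ℝ) '' (⇑(φ^(-n)) '' S) ⊆ Icc 0 1 := by
      rintro _ ⟨t, ⟨z, hzS, rfl⟩, rfl⟩
      have htlo : mv f (q:ℝ) ≤ (φ^(-n)) z := by
        have := (zpow_strictMono φ (dir_mono G.pf) (-n)).monotone hzS.2.1
        rwa [zpow_cancel] at this
      have hthi : (φ^(-n)) z < φ (mv f (q:ℝ)) := by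
        have := (zpow_strictMono φ (dir_mono G.pf) (-n)) hzS.2.2
        rwa [zpow_shift] at this
      have hlo : mw f g H (q:ℝ) ≤ aff f g H (q:ℝ) ((φ^(-n)) z) := by
        have := (aff_strictMono G hq).monotone htlo
        rwa [aff_m G hq] at this
      have hhi : aff f g H (q:ℝ) ((φ^(-n)) z) < ψ (mw f g H (q:ℝ)) := by
        have := (aff_strictMono G hq) hthi
        rwa [aff_fm G hq] at this
      constructor
      · refine le_trans ?_ hlo
        refine le_trans (av_nonneg' G.pg (G.nf_H hq)) (le_of_lt (mw_mem G hq).1)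
      · refine le_trans (le_of_lt hhi) ?_
        have hmem : ψ (mw f g H (q:ℝ)) ∈ Ioo (av g (H (q:ℝ))) (bv g (H (q:ℝ))) := by
          have := orb_mem ψ (dirg_mono G.pg) (dirg_fix G.pg (av_fix G.pg (G.nf_H hq)))
            (dirg_fix G.pg (bv_fix G.pg (G.nf_H hq))) 1 _ (mw_mem G hq)
          simpa using this
        exact le_trans (le_of_lt hmem.2) (bv_le_one' G.pg (G.nf_H hq))
    have h3 : volume (⇑(ψ^n) '' (aff f g H (q:ℝ) '' (⇑(φ^(-n)) '' S))) = 0 :=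
      ln_dirg_zpow G n _ hsub2 h2
    exact measure_mono_null himg h3
  have hFixnull : volume Fix2 = 0 := G.nullg
  refine measure_mono_null hcover ?_
  refine measure_union_null hFixnull (measure_iUnion_null hA0)

end lnpart

lemma pm_of_Hplus {f : Equiv.Perm ℝ} (hf : f ∈ Hplus 0 1) : Pm f := by
  obtain ⟨h1, h2, h3, _⟩ := hf
  have hm : StrictMono ⇑f := by
    intro x y hxy
    by_cases hx : x ∈ Icc (0:ℝ) 1 <;> by_cases hy : y ∈ Icc (0:ℝ) 1
    · exact h2 hx hy hxy
    · have hy1 : 1 < y := by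
        rcases not_and_or.1 (by rwa [mem_Icc] at hy) with h | h
        · exact absurd (le_trans hx.1 (le_of_lt hxy)) h
        · exact not_le.1 h
      calc f x ≤ 1 := (h3 hx).2
        _ < y := hy1
        _ = f y := (h1 y (by rw [mem_Icc]; push_neg; intro h'; linarith)).symm
    · have hx0 : x < 0 := by
        rcases not_and_or.1 (by rwa [mem_Icc] at hx) with h | h
        · exact not_le.1 h
        · exact absurd (le_trans (le_of_lt hxy) hy.2) h
      calc f x = x := h1 x (by rw [mem_Icc]; push_neg; intro h'; linarith)
        _ < 0 := hx0
        _ ≤ f y := (h3 hy).1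
    · rw [h1 x hx, h1 y hy]
      exact hxy
  have hf0 : f 0 = 0 := by
    have hc : f 0 ∈ Icc (0:ℝ) 1 := h3 (by norm_num)
    by_contra hne
    have hcpos : 0 < f 0 := lt_of_le_of_ne hc.1 (Ne.symm hne)
    set y := f 0 / 2 with hy
    have hyval : f (f.symm y) = y := f.apply_symm_apply y
    rcases le_or_gt 0 (f.symm y) with h | h
    · have := hm.monotone h
      rw [hyval] at this
      rw [hy] at this
      linarith
    · have : f (f.symm y) = f.symm y := h1 _ (by rw [mem_Icc]; push_neg; intro h'; linarith)
      rw [hyval] at this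
      rw [hy] at this
      linarith
  have hf1 : f 1 = 1 := by
    have hc : f 1 ∈ Icc (0:ℝ) 1 := h3 (by norm_num)
    by_contra hne
    have hclt : f 1 < 1 := lt_of_le_of_ne hc.2 hne
    set y := (f 1 + 1) / 2 with hy
    have hyval : f (f.symm y) = y := f.apply_symm_apply y
    rcases le_or_gt (f.symm y) 1 with h | h
    · have := hm.monotone h
      rw [hyval] at this
      rw [hy] at this
      linarith
    · have : f (f.symm y) = f.symm y := h1 _ (by rw [mem_Icc]; push_neg; intro h'; linarith)
      rw [hyval] at this
      rw [hy] at this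
      linarith
  refine ⟨hm, ?_⟩
  intro x hx
  rw [mem_Ioo] at hx
  push_neg at hx
  rcases lt_trichotomy x 0 with h | h | h
  · exact h1 x (by rw [mem_Icc]; push_neg; intro h'; linarith)
  · rw [h, hf0]
  · have h1x : 1 ≤ x := hx h
    rcases eq_or_lt_of_le h1x with h' | h'
    · rw [← h', hf1]
    · exact h1 x (by rw [mem_Icc]; push_neg; intro h'; linarith)

lemma mk_Gd {f g H : Equiv.Perm ℝ} (hf : f ∈ Hac 0 1) (hg : g ∈ Hac 0 1)
    (hfnull : volume (fixSet f) = 0) (hgnull : volume (fixSet g) = 0)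
    (hH : H ∈ Hplus 0 1) (hconj : H * f = g * H) : Gd f g H := by
  have pf := pm_of_Hplus hf.1
  have pg := pm_of_Hplus hg.1
  have pH := pm_of_Hplus hH
  refine ⟨pf, pg, pH, ?_, ?_, ?_, ?_, ?_, hfnull, hgnull⟩
  · intro x
    have := Equiv.ext_iff.1 hconj x
    simpa [Equiv.Perm.mul_apply] using this
  · exact luzinN_of_acOn ⇑f pf.mono.monotone hf.2.1
  · exact luzinN_of_acOn ⇑f.symm (symm_strictMono f pf.mono).monotone hf.2.2
  · exact luzinN_of_acOn ⇑g pg.mono.monotone hg.2.1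
  · exact luzinN_of_acOn ⇑g.symm (symm_strictMono g pg.mono).monotone hg.2.2

noncomputable def conjPerm {f g H : Equiv.Perm ℝ} (_G : Gd f g H) : Equiv.Perm ℝ where
  toFun := conjF f g H
  invFun := conjF g f H⁻¹
  left_inv := fun x => by
    have h := conjF_inv _G.swap x
    rwa [inv_inv] at h
  right_inv := conjF_inv _G

end S18

/-- If `f, g ∈ H₊^AC([0,1])` have Lebesgue-null fixed-point sets
and are conjugate in `H₊([0,1])`, then they are conjugate in `H₊^AC([0,1])`. -/
theorem conjugate_in_Hac_of_conjugate_in_Hplus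
    (f g : Equiv.Perm ℝ) (hf : f ∈ Hac 0 1) (hg : g ∈ Hac 0 1)
    (hfnull : volume (fixSet f) = 0) (hgnull : volume (fixSet g) = 0)
    (H : Equiv.Perm ℝ) (hH : H ∈ Hplus 0 1) (hconj : H * f = g * H) :
    ∃ h ∈ Hac 0 1, h * f = g * h := by
  have G := S18.mk_Gd hf hg hfnull hgnull hH hconj
  refine ⟨S18.conjPerm G, ⟨⟨?_, ?_, ?_, ?_⟩, ?_, ?_⟩, ?_⟩
  · intro x hx
    exact S18.conjF_id_outside G x (fun h' => hx (Ioo_subset_Icc_self h'))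
  · exact (S18.conjF_strictMono G).strictMonoOn _
  · intro x hx
    have h0 : S18.conjPerm G 0 = 0 := S18.conjF_id_outside G 0 (by norm_num)
    have h1 : S18.conjPerm G 1 = 1 := S18.conjF_id_outside G 1 (by norm_num)
    exact ⟨h0 ▸ (S18.conjF_strictMono G).monotone hx.1,
      h1 ▸ (S18.conjF_strictMono G).monotone hx.2⟩
  · exact (S18.perm_continuous _ (S18.conjF_strictMono G)).continuousOn
  · refine S18.acOn_of_luzinN (S18.conjPerm G) (S18.conjF_strictMono G) ?_ ?_ ?_
    · exact S18.conjF_id_outside G 0 (by norm_num)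
    · exact S18.conjF_id_outside G 1 (by norm_num)
    · exact S18.conjF_LN G
  · refine S18.acOn_of_luzinN (S18.conjPerm G).symm (S18.conjF_strictMono G.swap) ?_ ?_ ?_
    · exact S18.conjF_id_outside G.swap 0 (by norm_num)
    · exact S18.conjF_id_outside G.swap 1 (by norm_num)
    · exact S18.conjF_LN G.swap
  · refine Equiv.ext fun x => ?_
    rw [Equiv.Perm.mul_apply, Equiv.Perm.mul_apply]
    exact S18.conjF_conj G x
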